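/- arXiv:1602.07759 — 9 statements merged into one kernel-verified Lean document; each statement's English description precedes it below -/
import Mathlib

section
/- Given the data (i)–(v) of the general construction, the bracket [l₁+v₁+d₁, l₂+v₂+d₂] = ([l₁,l₂]_L + d₁·l₂ − d₂·l₁) + (σ(l₁,l₂) + d₁·v₂ − d₂·v₁ + τ(d₁,d₂)) + [d₁,d₂]_D on the vector space E = L ⊕ V ⊕ D is a Lie algebra bracket over k (it is bilinear, alternating, and satisfies the Jacobi identity). -/
/-!
Jacobi identity for `E = L ⊕ V ⊕ D` is checked one component at a time. In the `D`-component it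
is the Jacobi identity of `D`. In the `L`-component, the terms `⁅⁅l₁, l₂⁆, l₃⁆` cancel by the Jacobi
identity of `L`, and the mixed terms cancel because `D` acts by derivations through a Lie algebra
homomorphism. In the `V`-component, the terms involving only `L` cancel by the cocycle identity of `σ`,
the mixed ones by the `D`-equivariance of `σ` and the `D`-module structure of `V`, and the terms
involving only `D` by the cocycle identity of `τ`.
-/

/-- The bracket of the general construction on `E = L × V × D`. -/
def gcBracket {L V D : Type*} [LieRing L] [AddCommGroup V] [LieRing D]
    (act : D → L → L) (actV : D → V → V) (σ : L → L → V) (τ : D → D → V) :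
    (L × V × D) → (L × V × D) → (L × V × D) :=
  fun e₁ e₂ =>
    (⁅e₁.1, e₂.1⁆ + act e₁.2.2 e₂.1 - act e₂.2.2 e₁.1,
     σ e₁.1 e₂.1 + actV e₁.2.2 e₂.2.1 - actV e₂.2.2 e₁.2.1 + τ e₁.2.2 e₂.2.2,
     ⁅e₁.2.2, e₂.2.2⁆)

theorem lie_lie_add_lie_lie_add_lie_lie {M : Type*} [LieRing M] (x y z : M) :
    ⁅⁅x, y⁆, z⁆ + ⁅⁅y, z⁆, x⁆ + ⁅⁅z, x⁆, y⁆ = 0 := by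
  rw [← lie_skew ⁅x, y⁆, ← lie_skew ⁅y, z⁆, ← lie_skew ⁅z, x⁆, ← neg_add, ← neg_add,
    add_rotate, lie_jacobi, neg_zero]

section GeneralConstruction

variable {L V D : Type*} [LieRing L] [AddCommGroup V] [LieRing D]

theorem gcBracket_self {act : D → L → L} {actV : D → V → V} {σ : L → L → V} {τ : D → D → V}
    (hσ : ∀ l, σ l l = 0) (hτ : ∀ d, τ d d = 0) (e : L × V × D) :
    gcBracket act actV σ τ e e = 0 := by
  simp [gcBracket, hσ, hτ]

variable {R : Type*} [CommRing R] [LieAlgebra R L] [LieAlgebra R D] [Module R V]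
  (act : D →ₗ[R] L →ₗ[R] L) (actV : D →ₗ[R] V →ₗ[R] V) (σ : L →ₗ[R] L →ₗ[R] V)
  (τ : D →ₗ[R] D →ₗ[R] V)

local notation "br" => gcBracket (fun d l => act d l) (fun d v => actV d v)
  (fun l₁ l₂ => σ l₁ l₂) (fun d₁ d₂ => τ d₁ d₂)

theorem gcBracket_smul_add_left (a : R) (e₁ e₁' e₂ : L × V × D) :
    br (a • e₁ + e₁') e₂ = a • br e₁ e₂ + br e₁' e₂ := by
  simp only [gcBracket, Prod.smul_mk, Prod.mk_add_mk, Prod.fst_add, Prod.snd_add,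
    Prod.smul_fst, Prod.smul_snd, Prod.mk.injEq, map_add, map_smul, LinearMap.add_apply,
    LinearMap.smul_apply, add_lie, smul_lie, smul_add, smul_sub]
  exact ⟨by abel, by abel, trivial⟩

theorem gcBracket_smul_add_right (a : R) (e₁ e₂ e₂' : L × V × D) :
    br e₁ (a • e₂ + e₂') = a • br e₁ e₂ + br e₁ e₂' := by
  simp only [gcBracket, Prod.smul_mk, Prod.mk_add_mk, Prod.fst_add, Prod.snd_add,
    Prod.smul_fst, Prod.smul_snd, Prod.mk.injEq, map_add, map_smul, LinearMap.add_apply,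
    LinearMap.smul_apply, lie_add, lie_smul, smul_add, smul_sub]
  exact ⟨by abel, by abel, trivial⟩

theorem gcBracket_jacobi_fst
    (hactLie : ∀ d₁ d₂ : D, ∀ l : L, act ⁅d₁, d₂⁆ l = act d₁ (act d₂ l) - act d₂ (act d₁ l))
    (hactDer : ∀ (d : D) (l₁ l₂ : L), act d ⁅l₁, l₂⁆ = ⁅act d l₁, l₂⁆ + ⁅l₁, act d l₂⁆)
    (e₁ e₂ e₃ : L × V × D) :
    (br (br e₁ e₂) e₃ + br (br e₂ e₃) e₁ + br (br e₃ e₁) e₂).1 = 0 := by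
  obtain ⟨l₁, v₁, d₁⟩ := e₁
  obtain ⟨l₂, v₂, d₂⟩ := e₂
  obtain ⟨l₃, v₃, d₃⟩ := e₃
  simp only [gcBracket, Prod.fst_add, hactLie, hactDer, map_add, map_sub, add_lie, sub_lie]
  rw [← lie_skew l₁ (act d₃ l₂), ← lie_skew l₂ (act d₁ l₃), ← lie_skew l₃ (act d₂ l₁)]
  linear_combination (norm := abel) lie_lie_add_lie_lie_add_lie_lie l₁ l₂ l₃

theorem gcBracket_jacobi_snd_fst (hσalt : ∀ l : L, σ l l = 0)
    (hσcoc : ∀ l₁ l₂ l₃ : L, σ ⁅l₁, l₂⁆ l₃ + σ ⁅l₂, l₃⁆ l₁ + σ ⁅l₃, l₁⁆ l₂ = 0)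
    (hσequiv : ∀ (d : D) (l₁ l₂ : L), actV d (σ l₁ l₂) = σ (act d l₁) l₂ + σ l₁ (act d l₂))
    (hactVLie : ∀ d₁ d₂ : D, ∀ v : V, actV ⁅d₁, d₂⁆ v = actV d₁ (actV d₂ v) - actV d₂ (actV d₁ v))
    (hτcoc : ∀ d₁ d₂ d₃ : D,
      actV d₁ (τ d₂ d₃) + actV d₂ (τ d₃ d₁) + actV d₃ (τ d₁ d₂)
        = τ ⁅d₁, d₂⁆ d₃ + τ ⁅d₂, d₃⁆ d₁ + τ ⁅d₃, d₁⁆ d₂)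
    (e₁ e₂ e₃ : L × V × D) :
    (br (br e₁ e₂) e₃ + br (br e₂ e₃) e₁ + br (br e₃ e₁) e₂).2.1 = 0 := by
  obtain ⟨l₁, v₁, d₁⟩ := e₁
  obtain ⟨l₂, v₂, d₂⟩ := e₂
  obtain ⟨l₃, v₃, d₃⟩ := e₃
  simp only [gcBracket, Prod.snd_add, Prod.fst_add, hactVLie, hσequiv, map_add, map_sub,
    LinearMap.add_apply, LinearMap.sub_apply]
  rw [← LinearMap.IsAlt.neg hσalt (act d₃ l₂), ← LinearMap.IsAlt.neg hσalt (act d₁ l₃),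
    ← LinearMap.IsAlt.neg hσalt (act d₂ l₁)]
  linear_combination (norm := abel) hσcoc l₁ l₂ l₃ - hτcoc d₁ d₂ d₃

theorem gcBracket_jacobi_snd_snd (e₁ e₂ e₃ : L × V × D) :
    (br (br e₁ e₂) e₃ + br (br e₂ e₃) e₁ + br (br e₃ e₁) e₂).2.2 = 0 :=
  lie_lie_add_lie_lie_add_lie_lie e₁.2.2 e₂.2.2 e₃.2.2

end GeneralConstruction

theorem gc_bracket_is_lie_bracket_general
    {k L V D : Type*} [Field k]
    [LieRing L] [LieAlgebra k L] [LieRing D] [LieAlgebra k D]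
    [AddCommGroup V] [Module k V]
    -- (ii) an action of `D` on `L` by derivations of `L`
    (act : D →ₗ[k] L →ₗ[k] L)
    (hactLie : ∀ d₁ d₂ : D, ∀ l : L, act ⁅d₁, d₂⁆ l = act d₁ (act d₂ l) - act d₂ (act d₁ l))
    (hactDer : ∀ (d : D) (l₁ l₂ : L), act d ⁅l₁, l₂⁆ = ⁅act d l₁, l₂⁆ + ⁅l₁, act d l₂⁆)
    -- (iii) a `D`-module `V` (regarded as a trivial `L`-module)
    (actV : D →ₗ[k] V →ₗ[k] V)
    (hactVLie : ∀ d₁ d₂ : D, ∀ v : V, actV ⁅d₁, d₂⁆ v = actV d₁ (actV d₂ v) - actV d₂ (actV d₁ v))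
    -- (iv) an alternating central 2-cocycle `σ : L × L → V`, `D`-equivariant
    (σ : L →ₗ[k] L →ₗ[k] V)
    (hσalt : ∀ l : L, σ l l = 0)
    (hσcoc : ∀ l₁ l₂ l₃ : L, σ ⁅l₁, l₂⁆ l₃ + σ ⁅l₂, l₃⁆ l₁ + σ ⁅l₃, l₁⁆ l₂ = 0)
    (hσequiv : ∀ (d : D) (l₁ l₂ : L), actV d (σ l₁ l₂) = σ (act d l₁) l₂ + σ l₁ (act d l₂))
    -- (v) an alternating 2-cocycle `τ : D × D → V`
    (τ : D →ₗ[k] D →ₗ[k] V)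
    (hτalt : ∀ d : D, τ d d = 0)
    (hτcoc : ∀ d₁ d₂ d₃ : D,
      actV d₁ (τ d₂ d₃) + actV d₂ (τ d₃ d₁) + actV d₃ (τ d₁ d₂)
        = τ ⁅d₁, d₂⁆ d₃ + τ ⁅d₂, d₃⁆ d₁ + τ ⁅d₃, d₁⁆ d₂) :
    -- the bracket of the general construction:
    let br := gcBracket (fun d l => act d l) (fun d v => actV d v)
        (fun l₁ l₂ => σ l₁ l₂) (fun d₁ d₂ => τ d₁ d₂)
    -- is k-bilinear,
    (∀ (a : k) (e₁ e₁' e₂ : L × V × D),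
        br (a • e₁ + e₁') e₂ = a • br e₁ e₂ + br e₁' e₂) ∧
    (∀ (a : k) (e₁ e₂ e₂' : L × V × D),
        br e₁ (a • e₂ + e₂') = a • br e₁ e₂ + br e₁ e₂') ∧
    -- alternating,
    (∀ e : L × V × D, br e e = 0) ∧
    -- and satisfies the Jacobi identity.
    (∀ e₁ e₂ e₃ : L × V × D,
        br (br e₁ e₂) e₃ + br (br e₂ e₃) e₁ + br (br e₃ e₁) e₂ = 0) := by
  intro br
  refine ⟨gcBracket_smul_add_left act actV σ τ, gcBracket_smul_add_right act actV σ τ,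
    gcBracket_self hσalt hτalt, fun e₁ e₂ e₃ => Prod.ext ?_ (Prod.ext ?_ ?_)⟩
  · exact gcBracket_jacobi_fst act actV σ τ hactLie hactDer e₁ e₂ e₃
  · exact gcBracket_jacobi_snd_fst act actV σ τ hσalt hσcoc hσequiv hactVLie hτcoc e₁ e₂ e₃
  · exact gcBracket_jacobi_snd_snd act actV σ τ e₁ e₂ e₃

theorem gc_bracket_is_lie_bracket
    {k L V D : Type*} [Field k] [CharZero k]
    [LieRing L] [LieAlgebra k L] [LieRing D] [LieAlgebra k D]
    [AddCommGroup V] [Module k V]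
    -- (ii) an action of `D` on `L` by derivations of `L`
    (act : D →ₗ[k] L →ₗ[k] L)
    (hactLie : ∀ d₁ d₂ : D, ∀ l : L, act ⁅d₁, d₂⁆ l = act d₁ (act d₂ l) - act d₂ (act d₁ l))
    (hactDer : ∀ (d : D) (l₁ l₂ : L), act d ⁅l₁, l₂⁆ = ⁅act d l₁, l₂⁆ + ⁅l₁, act d l₂⁆)
    -- (iii) a `D`-module `V` (regarded as a trivial `L`-module)
    (actV : D →ₗ[k] V →ₗ[k] V)
    (hactVLie : ∀ d₁ d₂ : D, ∀ v : V, actV ⁅d₁, d₂⁆ v = actV d₁ (actV d₂ v) - actV d₂ (actV d₁ v))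
    -- (iv) an alternating central 2-cocycle `σ : L × L → V`, `D`-equivariant
    (σ : L →ₗ[k] L →ₗ[k] V)
    (hσalt : ∀ l : L, σ l l = 0)
    (hσcoc : ∀ l₁ l₂ l₃ : L, σ ⁅l₁, l₂⁆ l₃ + σ ⁅l₂, l₃⁆ l₁ + σ ⁅l₃, l₁⁆ l₂ = 0)
    (hσequiv : ∀ (d : D) (l₁ l₂ : L), actV d (σ l₁ l₂) = σ (act d l₁) l₂ + σ l₁ (act d l₂))
    -- (v) an alternating 2-cocycle `τ : D × D → V`
    (τ : D →ₗ[k] D →ₗ[k] V)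
    (hτalt : ∀ d : D, τ d d = 0)
    (hτcoc : ∀ d₁ d₂ d₃ : D,
      actV d₁ (τ d₂ d₃) + actV d₂ (τ d₃ d₁) + actV d₃ (τ d₁ d₂)
        = τ ⁅d₁, d₂⁆ d₃ + τ ⁅d₂, d₃⁆ d₁ + τ ⁅d₃, d₁⁆ d₂) :
    -- the bracket of the general construction:
    let br := gcBracket (fun d l => act d l) (fun d v => actV d v)
        (fun l₁ l₂ => σ l₁ l₂) (fun d₁ d₂ => τ d₁ d₂)
    -- is k-bilinear,
    (∀ (a : k) (e₁ e₁' e₂ : L × V × D),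
        br (a • e₁ + e₁') e₂ = a • br e₁ e₂ + br e₁' e₂) ∧
    (∀ (a : k) (e₁ e₂ e₂' : L × V × D),
        br e₁ (a • e₂ + e₂') = a • br e₁ e₂ + br e₁ e₂') ∧
    -- alternating,
    (∀ e : L × V × D, br e e = 0) ∧
    -- and satisfies the Jacobi identity.
    (∀ e₁ e₂ e₃ : L × V × D,
        br (br e₁ e₂) e₃ + br (br e₂ e₃) e₁ + br (br e₃ e₁) e₂ = 0) :=
  gc_bracket_is_lie_bracket_general act hactLie hactDer actV hactVLie σ hσalt hσcoc hσequiv τ hτalt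
    hτcoc
end

section
/- In the Lie algebra E = (L,σ,τ) of the general construction, let x ∈ L and let e = l + v + d ∈ E (with l ∈ L, v ∈ V, d ∈ D). Put e₁ = [x,l]_L − d·x ∈ L. Then (ad_E x)(e) = e₁ + σ(x,l), and for every n ≥ 2, (ad_E x)ⁿ(e) = (ad_L x)^{n−1}(e₁) + σ(x, (ad_L x)^{n−2}(e₁)). In particular, if ad_L x is a nilpotent endomorphism of L, then ad_E x is a nilpotent endomorphism of E. -/
theorem gc_adE_iterate_and_nilpotent
    {k L V D : Type*} [Field k] [CharZero k]
    [LieRing L] [LieAlgebra k L] [LieRing D] [LieAlgebra k D]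
    [AddCommGroup V] [Module k V]
    -- (ii) an action of `D` on `L` by derivations of `L`
    (act : D →ₗ[k] L →ₗ[k] L)
    (hactLie : ∀ d₁ d₂ : D, ∀ l : L, act ⁅d₁, d₂⁆ l = act d₁ (act d₂ l) - act d₂ (act d₁ l))
    (hactDer : ∀ (d : D) (l₁ l₂ : L), act d ⁅l₁, l₂⁆ = ⁅act d l₁, l₂⁆ + ⁅l₁, act d l₂⁆)
    -- (iii) a `D`-module `V` (regarded as a trivial `L`-module)
    (actV : D →ₗ[k] V →ₗ[k] V)
    (hactVLie : ∀ d₁ d₂ : D, ∀ v : V, actV ⁅d₁, d₂⁆ v = actV d₁ (actV d₂ v) - actV d₂ (actV d₁ v))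
    -- (iv) an alternating central 2-cocycle `σ : L × L → V`, `D`-equivariant
    (σ : L →ₗ[k] L →ₗ[k] V)
    (hσalt : ∀ l : L, σ l l = 0)
    (hσcoc : ∀ l₁ l₂ l₃ : L, σ ⁅l₁, l₂⁆ l₃ + σ ⁅l₂, l₃⁆ l₁ + σ ⁅l₃, l₁⁆ l₂ = 0)
    (hσequiv : ∀ (d : D) (l₁ l₂ : L), actV d (σ l₁ l₂) = σ (act d l₁) l₂ + σ l₁ (act d l₂))
    -- (v) an alternating 2-cocycle `τ : D × D → V`
    (τ : D →ₗ[k] D →ₗ[k] V)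
    (hτalt : ∀ d : D, τ d d = 0)
    (hτcoc : ∀ d₁ d₂ d₃ : D,
      actV d₁ (τ d₂ d₃) + actV d₂ (τ d₃ d₁) + actV d₃ (τ d₁ d₂)
        = τ ⁅d₁, d₂⁆ d₃ + τ ⁅d₂, d₃⁆ d₁ + τ ⁅d₃, d₁⁆ d₂)
    (x : L) :
    let br := gcBracket (fun d l => act d l) (fun d v => actV d v)
        (fun l₁ l₂ => σ l₁ l₂) (fun d₁ d₂ => τ d₁ d₂)
    let adE : (L × V × D) → (L × V × D) := fun e => br (x, 0, 0) e
    let adL : L → L := fun y => ⁅x, y⁆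
    -- `(ad_E x)(e) = e₁ + σ(x,l)` where `e₁ = [x,l] − d·x`
    (∀ (l : L) (v : V) (d : D), adE (l, v, d) = (⁅x, l⁆ - act d x, σ x l, 0)) ∧
    -- for `n ≥ 2`:  `(ad_E x)ⁿ(e) = (ad_L x)^{n−1}(e₁) + σ(x, (ad_L x)^{n−2}(e₁))`
    (∀ (n : ℕ), 2 ≤ n → ∀ (l : L) (v : V) (d : D),
        adE^[n] (l, v, d)
          = (adL^[n-1] (⁅x, l⁆ - act d x), σ x (adL^[n-2] (⁅x, l⁆ - act d x)), 0)) ∧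
    -- if `ad_L x` is nilpotent then so is `ad_E x`
    ((∃ N : ℕ, ∀ y : L, adL^[N] y = 0) → ∃ M : ℕ, ∀ e : L × V × D, adE^[M] e = 0) := by
  intro br adE adL
  have h1 : ∀ (l : L) (v : V) (d : D), adE (l, v, d) = (⁅x, l⁆ - act d x, σ x l, 0) := by
    intro l v d
    simp [adE, br, gcBracket]
  have h0 : ∀ (l' : L) (v' : V), adE (l', v', 0) = (⁅x, l'⁆, σ x l', 0) := by
    intro l' v'
    rw [h1]; simp
  have h2 : ∀ (n : ℕ), 2 ≤ n → ∀ (l : L) (v : V) (d : D),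
      adE^[n] (l, v, d)
        = (adL^[n-1] (⁅x, l⁆ - act d x), σ x (adL^[n-2] (⁅x, l⁆ - act d x)), 0) := by
    intro n hn
    induction n, hn using Nat.le_induction with
    | base =>
      intro l v d
      have : adE^[2] (l, v, d) = adE (adE (l, v, d)) := by
        simp [Function.iterate_succ_apply']
      rw [this, h1 l v d, h1]
      simp [adL]
    | succ n hn ih =>
      intro l v d
      rw [Function.iterate_succ_apply', ih l v d, h0]
      have e1 : n + 1 - 1 = n := by omega
      have e2 : n + 1 - 2 = n - 1 := by omega
      have e3 : n - 1 + 1 = n := by omega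
      rw [e1, e2, ← e3, Function.iterate_succ_apply']
      simp [adL]
  refine ⟨h1, h2, ?_⟩
  rintro ⟨N, hN⟩
  refine ⟨N + 2, ?_⟩
  rintro ⟨l, v, d⟩
  rw [h2 (N + 2) (by omega)]
  have e1 : N + 2 - 1 = N + 1 := by omega
  have e2 : N + 2 - 2 = N := by omega
  rw [e1, e2, Function.iterate_succ_apply', hN]
  simp [adL, Prod.ext_iff]
end

section
/- Let (E,H,(·|·)) be an extended affine Lie algebra over a field k of characteristic 0, with core E_c. Then for every ideal I of the Lie algebra E, either I ⊆ Z(E_c) (the centre of E_c) or E_c ⊆ I. -/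
/-! Statement 4: ideals of an extended affine Lie algebra. -/

section EALA

variable {k E : Type*} [Field k] [CharZero k] [LieRing E] [LieAlgebra k E]

/-- The weight space of the toral subalgebra `H` for the weight `α ∈ H*`:
`E_α = {e ∈ E : [h,e] = α(h)e for all h ∈ H}`. -/
def wtSpace (H : LieSubalgebra k E) (α : Module.Dual k H) : Submodule k E where
  carrier := {e | ∀ h : H, ⁅(h : E), e⁆ = α h • e}
  add_mem' := by
    intro a b ha hb h
    simp only [lie_add, ha h, hb h, smul_add]
  zero_mem' := by
    intro h
    simp
  smul_mem' := by
    intro c a ha h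
    rw [lie_smul, ha h, smul_comm]

/-- The set of roots `Ψ` of `(E,H)`: those `α ∈ H*` with `E_α ≠ 0` (note `0 ∈ Ψ`). -/
def rootSet (H : LieSubalgebra k E) : Set (Module.Dual k H) :=
  {α | wtSpace H α ≠ ⊥}

variable (B : E →ₗ[k] E →ₗ[k] k)

/-- The representatives `t_α ∈ H` of `α ∈ H*` under the form: `(t_α | h) = α(h)` for `h ∈ H`. -/
def reps (H : LieSubalgebra k E) (α : Module.Dual k H) : Set H :=
  {t | ∀ h : H, B (t : E) (h : E) = α h}

/-- The anisotropic roots: `Ψ^an = {α ∈ Ψ : (α|α) ≠ 0}`. -/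
def anisoRootSet (H : LieSubalgebra k E) : Set (Module.Dual k H) :=
  {α | α ∈ rootSet H ∧ ∃ t ∈ reps B H α, B (t : E) (t : E) ≠ 0}

/-- The isotropic (null) roots: `Ψ⁰ = {α ∈ Ψ : (α|α) = 0}`. -/
def isoRootSet (H : LieSubalgebra k E) : Set (Module.Dual k H) :=
  {α | α ∈ rootSet H ∧ ∃ t ∈ reps B H α, B (t : E) (t : E) = 0}

/-- The core `E_c` of `(E, H, (·|·))`: the subalgebra of `E` generated by
`⋃_{α ∈ Ψ^an} E_α`. -/
def core (H : LieSubalgebra k E) : LieSubalgebra k E :=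
  LieSubalgebra.lieSpan k E (⋃ α ∈ anisoRootSet B H, (wtSpace H α : Set E))

/-- An extended affine Lie algebra structure `(E, H, (·|·))` (paper §2.3):
axioms (EA1)–(EA5), together with the requirements that the bilinear form is
nondegenerate, symmetric and invariant. -/
structure IsEALA (H : LieSubalgebra k E) : Prop where
  /-- the form is symmetric -/
  symm : ∀ x y : E, B x y = B y x
  /-- the form is invariant -/
  invariant : ∀ x y z : E, B ⁅x, y⁆ z = B x ⁅y, z⁆
  /-- the form is nondegenerate -/
  nondeg : ∀ x : E, (∀ y : E, B x y = 0) → x = 0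
  /-- (EA1): `H` is nontrivial … -/
  H_ne_bot : H ≠ ⊥
  /-- … finite-dimensional … -/
  H_fd : FiniteDimensional k H
  /-- … self-centralizing (in particular abelian): `E_0 = H` … -/
  self_centralizing : wtSpace H 0 = H.toSubmodule
  /-- … and toral: `E = ⊕_{α ∈ H*} E_α` -/
  toral : (⨆ α : Module.Dual k H, wtSpace H α) = ⊤
  /-- the restriction of the form to `H × H` is nondegenerate -/
  H_nondeg : ∀ t : H, (∀ h : H, B (t : E) (h : E) = 0) → t = 0
  /-- (EA2): `ad x` is locally nilpotent for `x ∈ E_α`, `α ∈ Ψ^an` -/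
  ea2 : ∀ α ∈ anisoRootSet B H, ∀ x ∈ wtSpace H α, ∀ e : E,
    ∃ N : ℕ, (fun y => ⁅x, y⁆)^[N] e = 0
  /-- (EA3): `Ψ^an` is connected -/
  ea3 : ∀ Ψ₁ Ψ₂ : Set (Module.Dual k H), anisoRootSet B H = Ψ₁ ∪ Ψ₂ →
    Ψ₁.Nonempty → Ψ₂.Nonempty →
    ∃ α ∈ Ψ₁, ∃ β ∈ Ψ₂, ∃ t ∈ reps B H α, ∃ s ∈ reps B H β, B (t : E) (s : E) ≠ 0
  /-- (EA4): the centralizer of the core is contained in the core -/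
  ea4 : ∀ e : E, (∀ x ∈ core B H, ⁅e, x⁆ = 0) → e ∈ core B H
  /-- (EA5): the subgroup of `(H*,+)` generated by `Ψ⁰` is free abelian of finite rank -/
  ea5 : ∃ n : ℕ, Nonempty ((AddSubgroup.closure (isoRootSet B H)) ≃+ (Fin n → ℤ))

end EALA

/-! The ideal `I` is graded by the weights of `H`. Hence if some `x ∈ E_α`, `α` anisotropic,
pairs nontrivially with `I`, then `I ∩ E_{-α}` contains some `u` with `(x|u) ≠ 0`, and
`[x, u] ∈ I ∩ H` is a nonzero multiple of `t_α`. Since `α(t_α) = (α|α) ≠ 0`, this forces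
`E_{±α} ⊆ I`, and nondegeneracy of the pairing `E_β × E_{-β}` propagates `t_β ∈ I` to every
anisotropic `β` with `(α|β) ≠ 0`. By connectedness (EA3) either every anisotropic `t_α` lies
in `I`, and then `E_c ⊆ I`, or none does; then every anisotropic `E_α` is orthogonal to `I`,
so `[E_α, I] = 0` by invariance and nondegeneracy, `I` centralizes `E_c`, and (EA4) gives
`I ⊆ Z(E_c)`. -/

theorem Module.End.mem_of_sum_mem_of_mem_eigenspace {K V ι : Type*} [Field K] [AddCommGroup V]
    [Module K V] [DecidableEq ι] (f : Module.End K V) {p : Submodule K V}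
    (hp : ∀ x ∈ p, f x ∈ p) {μ : ι → K} (s : Finset ι) (hμ : Set.InjOn μ s) :
    ∀ v : ι → V, (∀ i ∈ s, v i ∈ f.eigenspace (μ i)) → ∑ i ∈ s, v i ∈ p → ∀ i ∈ s, v i ∈ p := by
  induction s using Finset.induction_on with
  | empty => simp
  | insert j s hj ih =>
    intro v hv hsum
    have hμs : Set.InjOn μ s := hμ.mono (Finset.coe_subset.mpr (Finset.subset_insert j s))
    have hμj : ∀ i ∈ s, μ i - μ j ≠ 0 := fun i hi =>
      sub_ne_zero.mpr fun he => hj (hμ (by simp [hi]) (by simp) he ▸ hi)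
    -- Applying `f - μ j` kills the `j`-component and rescales the others.
    have hshift : ∑ i ∈ s, (μ i - μ j) • v i ∈ p := by
      have hmem := p.sub_mem (hp _ hsum) (p.smul_mem (μ j) hsum)
      rw [Finset.sum_insert hj] at hmem
      convert hmem using 1
      rw [map_add, map_sum, smul_add, Finset.smul_sum, Module.End.mem_eigenspace_iff.mp
        (hv j (by simp)), add_sub_add_left_eq_sub, ← Finset.sum_sub_distrib]
      refine Finset.sum_congr rfl fun i hi => ?_
      rw [Module.End.mem_eigenspace_iff.mp (hv i (by simp [hi])), sub_smul]
    have hs : ∀ i ∈ s, v i ∈ p := fun i hi => by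
      have := ih hμs (fun i => (μ i - μ j) • v i)
        (fun i hi => Submodule.smul_mem _ _ (hv i (by simp [hi]))) hshift i hi
      exact (p.smul_mem_iff (hμj i hi)).mp this
    intro i hi
    rcases Finset.mem_insert.mp hi with rfl | hi
    · rw [Finset.sum_insert hj] at hsum
      simpa using p.sub_mem hsum (p.sum_mem hs)
    · exact hs i hi

section WeightSpaces

variable {k E : Type*} [Field k] [LieRing E] [LieAlgebra k E] {H : LieSubalgebra k E}

theorem lie_mem_wtSpace_add {α β : Module.Dual k H} {x y : E} (hx : x ∈ wtSpace H α)
    (hy : y ∈ wtSpace H β) : ⁅x, y⁆ ∈ wtSpace H (α + β) := fun h => by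
  rw [leibniz_lie, hx h, hy h, smul_lie, lie_smul, LinearMap.add_apply, add_smul]

theorem LieIdeal.mem_of_mem_wtSpace_of_apply_ne_zero (I : LieIdeal k E) {t : H}
    (ht : (t : E) ∈ I) {γ : Module.Dual k H} (hγ : γ t ≠ 0) {y : E} (hy : y ∈ wtSpace H γ) :
    y ∈ I := by
  have hmem : γ t • y ∈ I := hy t ▸ lie_mem_left k E I _ _ ht
  exact (I.toSubmodule.smul_mem_iff hγ).mp hmem

theorem LieIdeal.mem_of_sum_mem_wtSpace [Infinite k] (I : LieIdeal k E)
    (f : Module.Dual k H →₀ E) (hf : ∀ γ, f γ ∈ wtSpace H γ) (hI : (f.sum fun _ v => v) ∈ I)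
    (γ : Module.Dual k H) : f γ ∈ I := by
  classical
  -- Some `h₀ ∈ H` separates the finitely many weights occurring in `f`, so that the
  -- components of `f` are eigenvectors of `ad h₀` for distinct eigenvalues.
  obtain ⟨h₀, hh₀⟩ := Module.Dual.exists_forall_ne_zero_of_forall_exists
    (ι := {p : f.support × f.support // p.1 ≠ p.2}) (fun p => p.1.1.1 - p.1.2.1)
    fun p => DFunLike.ne_iff.mp (sub_ne_zero.mpr (Subtype.coe_ne_coe.mpr p.2))
  have hinj : Set.InjOn (fun γ : Module.Dual k H => γ h₀) f.support := fun β hβ γ hγ hβγ => by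
    by_contra hne
    exact hh₀ ⟨(⟨β, hβ⟩, ⟨γ, hγ⟩), fun he => hne (congrArg Subtype.val he)⟩ (sub_eq_zero.mpr hβγ)
  by_cases hγ : γ ∈ f.support
  · refine Module.End.mem_of_sum_mem_of_mem_eigenspace (LieAlgebra.ad k E h₀)
      (p := I.toSubmodule) (fun x hx => I.lie_mem hx) f.support hinj f
      (fun β _ => Module.End.mem_eigenspace_iff.mpr (hf β h₀)) hI γ hγ
  · rw [Finsupp.notMem_support_iff.mp hγ]
    exact I.zero_mem

end WeightSpaces

section InvariantForm

variable {k E : Type*} [Field k] [LieRing E] [LieAlgebra k E] {B : E →ₗ[k] E →ₗ[k] k}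
  {H : LieSubalgebra k E}

theorem apply_eq_zero_of_mem_wtSpace (hB : ∀ x y z : E, B ⁅x, y⁆ z = B x ⁅y, z⁆)
    {β γ : Module.Dual k H} (hβγ : β + γ ≠ 0) {x y : E} (hx : x ∈ wtSpace H β)
    (hy : y ∈ wtSpace H γ) : B x y = 0 := by
  obtain ⟨h₀, hh₀⟩ := DFunLike.ne_iff.mp hβγ
  have hinv := hB x h₀ y
  rw [← lie_skew, hx h₀, hy h₀, map_neg, map_smul, map_smul] at hinv
  simp only [LinearMap.neg_apply, LinearMap.smul_apply, smul_eq_mul] at hinv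
  have hzero : (β h₀ + γ h₀) * B x y = 0 := by linear_combination -hinv
  exact (mul_eq_zero.mp hzero).resolve_left hh₀

theorem apply_lie_eq_mul (hB : ∀ x y z : E, B ⁅x, y⁆ z = B x ⁅y, z⁆) {α : Module.Dual k H}
    {x u : E} (hu : u ∈ wtSpace H (-α)) (h : H) : B ⁅x, u⁆ h = α h * B x u := by
  rw [hB, ← lie_skew, hu h, LinearMap.neg_apply, neg_smul, neg_neg, map_smul, smul_eq_mul]

end InvariantForm

theorem core_le_of_forall_wtSpace_le {k E : Type*} [Field k] [LieRing E] [LieAlgebra k E]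
    {B : E →ₗ[k] E →ₗ[k] k} {H : LieSubalgebra k E} {K : LieSubalgebra k E}
    (hK : ∀ α ∈ anisoRootSet B H, wtSpace H α ≤ K.toSubmodule) : core B H ≤ K :=
  LieSubalgebra.lieSpan_le.mpr (Set.iUnion₂_subset hK)

namespace IsEALA

variable {k E : Type*} [Field k] [LieRing E] [LieAlgebra k E]
  {B : E →ₗ[k] E →ₗ[k] k} {H : LieSubalgebra k E} (h : IsEALA B H)
include h

theorem eq_of_mem_reps {α : Module.Dual k H} {t t' : H} (ht : t ∈ reps B H α)
    (ht' : t' ∈ reps B H α) : t = t' :=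
  sub_eq_zero.mp <| h.H_nondeg _ fun h' => by
    rw [H.coe_sub, map_sub, LinearMap.sub_apply, ht h', ht' h', sub_self]

theorem apply_ne_zero_of_mem_reps {α : Module.Dual k H} (hα : α ∈ anisoRootSet B H) {t : H}
    (ht : t ∈ reps B H α) : α t ≠ 0 := by
  obtain ⟨-, t', ht', hne⟩ := hα
  rwa [← ht t, h.eq_of_mem_reps ht ht']

theorem exists_mem_wtSpace_neg_apply_ne_zero {β : Module.Dual k H} {x : E}
    (hx : x ∈ wtSpace H β) (hx0 : x ≠ 0) : ∃ y ∈ wtSpace H (-β), B x y ≠ 0 := by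
  by_contra! hcon
  refine hx0 (h.nondeg x fun y => Submodule.iSup_induction (motive := fun y => B x y = 0) _
    (h.toral ▸ Submodule.mem_top : y ∈ ⨆ γ, wtSpace H γ) (fun γ w hw => ?_) (map_zero _)
    fun a b ha hb => by rw [map_add, ha, hb, add_zero])
  by_cases hγ : γ = -β
  · exact hcon w (hγ ▸ hw)
  · exact apply_eq_zero_of_mem_wtSpace h.invariant
      (fun hs => hγ (eq_neg_of_add_eq_zero_right hs)) hx hw


theorem lie_eq_zero_of_forall_apply_eq_zero (I : LieIdeal k E) {x z : E}
    (hx : ∀ z ∈ I, B x z = 0) (hz : z ∈ I) : ⁅x, z⁆ = 0 :=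
  h.nondeg _ fun y => by rw [h.invariant]; exact hx _ (lie_mem_left k E I _ _ hz)

theorem exists_mem_wtSpace_neg_mem_apply_ne_zero [Infinite k] (I : LieIdeal k E)
    {α : Module.Dual k H} {x z : E} (hx : x ∈ wtSpace H α) (hz : z ∈ I) (hxz : B x z ≠ 0) :
    ∃ u ∈ wtSpace H (-α), u ∈ I ∧ B x u ≠ 0 := by
  obtain ⟨f, hf, rfl⟩ := (Submodule.mem_iSup_iff_exists_finsupp _ _).mp
    (h.toral ▸ Submodule.mem_top : z ∈ ⨆ γ, wtSpace H γ)
  refine ⟨f (-α), hf _, I.mem_of_sum_mem_wtSpace f hf hz _, ?_⟩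
  rwa [Finsupp.sum, map_sum, Finset.sum_eq_single (-α)
    (fun γ _ hγ => apply_eq_zero_of_mem_wtSpace h.invariant
      (fun hs => hγ (eq_neg_of_add_eq_zero_right hs)) hx (hf γ))
    (fun hα => by rw [Finsupp.notMem_support_iff.mp hα, map_zero])] at hxz

theorem exists_mem_reps_eq_smul_lie {α : Module.Dual k H} {x u : E} (hx : x ∈ wtSpace H α)
    (hu : u ∈ wtSpace H (-α)) (hxu : B x u ≠ 0) :
    ∃ t ∈ reps B H α, (t : E) = (B x u)⁻¹ • ⁅x, u⁆ := by
  have hxuH : ⁅x, u⁆ ∈ H := by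
    have := lie_mem_wtSpace_add hx hu
    rwa [add_neg_cancel, h.self_centralizing] at this
  refine ⟨⟨(B x u)⁻¹ • ⁅x, u⁆, H.smul_mem _ hxuH⟩, fun h' => ?_, rfl⟩
  rw [map_smul, LinearMap.smul_apply, apply_lie_eq_mul h.invariant hu, smul_eq_mul]
  field_simp

theorem exists_mem_reps_mem_of_apply_ne_zero [Infinite k] (I : LieIdeal k E)
    {α : Module.Dual k H} {x z : E} (hx : x ∈ wtSpace H α) (hz : z ∈ I) (hxz : B x z ≠ 0) :
    ∃ t ∈ reps B H α, (t : E) ∈ I := by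
  obtain ⟨u, hu, huI, hxu⟩ := h.exists_mem_wtSpace_neg_mem_apply_ne_zero I hx hz hxz
  obtain ⟨t, ht, hteq⟩ := h.exists_mem_reps_eq_smul_lie hx hu hxu
  exact ⟨t, ht, hteq ▸ I.smul_mem _ (lie_mem_right k E I _ _ huI)⟩

theorem exists_mem_reps_mem_of_apply_reps_ne_zero [Infinite k] (I : LieIdeal k E)
    {β : Module.Dual k H} {t s : H} (htI : (t : E) ∈ I)
    (hβ : β ∈ rootSet H) (hs : s ∈ reps B H β) (hts : B t s ≠ 0) :
    ∃ t' ∈ reps B H β, (t' : E) ∈ I := by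
  have hβt : (-β) t ≠ 0 := by
    rw [LinearMap.neg_apply, neg_ne_zero, ← hs t, h.symm]
    exact hts
  obtain ⟨x, hx, hx0⟩ := (Submodule.ne_bot_iff _).mp hβ
  obtain ⟨y, hy, hxy⟩ := h.exists_mem_wtSpace_neg_apply_ne_zero hx hx0
  exact h.exists_mem_reps_mem_of_apply_ne_zero I hx
    (I.mem_of_mem_wtSpace_of_apply_ne_zero htI hβt hy) hxy

theorem eq_empty_or_eq_of_closed {S : Set (Module.Dual k H)} (hS : S ⊆ anisoRootSet B H)
    (hclosed : ∀ α ∈ S, ∀ β ∈ anisoRootSet B H, ∀ t ∈ reps B H α, ∀ s ∈ reps B H β,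
      B t s ≠ 0 → β ∈ S) :
    S = ∅ ∨ S = anisoRootSet B H := by
  by_contra! hne
  obtain ⟨α, hα, β, hβ, t, ht, s, hs, hts⟩ := h.ea3 S (anisoRootSet B H \ S)
    (Set.union_sdiff_cancel hS).symm hne.1
    (Set.sdiff_nonempty.mpr fun hsub => hne.2 (hS.antisymm hsub))
  exact hβ.2 (hclosed α hα β hβ.1 t ht s hs hts)

theorem lie_eq_zero_of_mem_core (I : LieIdeal k E)
    (hI : ∀ α ∈ anisoRootSet B H, ∀ x ∈ wtSpace H α, ∀ z ∈ I, B x z = 0) {z x : E}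
    (hz : z ∈ I) (hx : x ∈ core B H) : ⁅z, x⁆ = 0 := by
  have hcore : core B H ≤ (LieModule.ker k E I).toLieSubalgebra :=
    core_le_of_forall_wtSpace_le fun α hα y hy => (LieModule.mem_ker k E I _).mpr fun w =>
      Subtype.ext (h.lie_eq_zero_of_forall_apply_eq_zero I (hI α hα y hy) w.2)
  rw [← lie_skew, neg_eq_zero]
  exact congrArg Subtype.val ((LieModule.mem_ker k E I _).mp (hcore hx) ⟨z, hz⟩)

end IsEALA


/-- Proposition 3.1 of the paper: in an EALA `(E,H,(·|·))`, every ideal `I`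
of `E` either is contained in the centre of the core `E_c`, or contains `E_c`. -/
theorem eala_ideal_dichotomy
    {k E : Type*} [Field k] [CharZero k] [LieRing E] [LieAlgebra k E]
    (B : E →ₗ[k] E →ₗ[k] k) (H : LieSubalgebra k E)
    (h : IsEALA B H)
    (I : LieIdeal k E) :
    (∀ z ∈ I, z ∈ core B H ∧ ∀ x ∈ core B H, ⁅z, x⁆ = 0) ∨
    (∀ x ∈ core B H, x ∈ I) := by
  set S := {α ∈ anisoRootSet B H | ∃ t ∈ reps B H α, (t : E) ∈ I}
  have hclosed : ∀ α ∈ S, ∀ β ∈ anisoRootSet B H, ∀ t ∈ reps B H α, ∀ s ∈ reps B H β,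
      B t s ≠ 0 → β ∈ S := fun α ⟨_, t', ht', ht'I⟩ β hβ t ht s hs hts =>
    ⟨hβ, h.exists_mem_reps_mem_of_apply_reps_ne_zero I ht'I hβ.1 hs
      (h.eq_of_mem_reps ht ht' ▸ hts)⟩
  rcases h.eq_empty_or_eq_of_closed (Set.sep_subset _ _) hclosed with hS | hS
  · have hcentral : ∀ z ∈ I, ∀ x ∈ core B H, ⁅z, x⁆ = 0 := fun z hz x hx =>
      h.lie_eq_zero_of_mem_core I (fun α hα y hy w hw => by
        by_contra hyw
        exact hS.subset ⟨hα, h.exists_mem_reps_mem_of_apply_ne_zero I hy hw hyw⟩) hz hx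
    exact Or.inl fun z hz => ⟨h.ea4 z (hcentral z hz), hcentral z hz⟩
  · refine Or.inr fun x hx => core_le_of_forall_wtSpace_le (K := I.toLieSubalgebra) ?_ hx
    intro α hα y hy
    obtain ⟨-, t, ht, htI⟩ := hS.symm ▸ hα
    exact I.mem_of_mem_wtSpace_of_apply_ne_zero htI (h.apply_ne_zero_of_mem_reps hα ht) hy
end

section
/- Let E be a Lie algebra over a field k of characteristic 0 equipped with a nondegenerate symmetric invariant bilinear form (·|·), and let I be a perfect ideal of E (i.e. I = [I,I]). Then for z ∈ I the following are equivalent: (1) [z, x] = 0 for all x ∈ I (z is central in I); (2) (z | x) = 0 for all x ∈ I (z lies in the radical of the restriction of (·|·) to I). In other words, the centre of I equals the radical of the restriction of the form to I. -/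
/-!
Statement 8 (used in the proof of Corollary 3.3 of the paper): for a perfect ideal `I`
of a Lie algebra `E` carrying a nondegenerate symmetric invariant bilinear form, the
centre of `I` equals the radical of the restriction of the form to `I`.
-/

theorem centre_eq_radical_of_perfect_ideal
    {k E : Type*} [Field k] [CharZero k] [LieRing E] [LieAlgebra k E]
    -- a nondegenerate symmetric invariant bilinear form on `E`
    (B : E →ₗ[k] E →ₗ[k] k)
    (hsymm : ∀ x y : E, B x y = B y x)
    (hinv : ∀ x y z : E, B ⁅x, y⁆ z = B x ⁅y, z⁆)
    (hnondeg : ∀ x : E, (∀ y : E, B x y = 0) → x = 0)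
    -- a perfect ideal `I` of `E`
    (I : LieIdeal k E)
    (hperf : ⁅I, I⁆ = I)
    (z : E) (hz : z ∈ I) :
    (∀ x ∈ I, ⁅z, x⁆ = 0) ↔ (∀ x ∈ I, B z x = 0) := by
  constructor
  · intro hc x hx
    have hx' : x ∈ (⁅I, I⁆ : LieIdeal k E) := by rw [hperf]; exact hx
    rw [← LieSubmodule.mem_toSubmodule, LieSubmodule.lieIdeal_oper_eq_linear_span'] at hx'
    refine Submodule.span_induction ?_ ?_ ?_ ?_ hx'
    · rintro m ⟨a, ha, b, hb, rfl⟩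
      rw [← hinv, hc a ha, map_zero]
      rfl
    · simp
    · intro a b _ _ h1 h2; rw [map_add, h1, h2, add_zero]
    · intro t a _ h; rw [map_smul, h, smul_zero]
  · intro hr x hx
    apply hnondeg
    intro y
    rw [hinv]
    have : ⁅x, y⁆ ∈ I := by
      rw [← lie_skew]
      exact I.neg_mem (I.lie_mem hx)
    exact hr _ this
end

section
/- In the Lie algebra E = (L,σ,τ) of the general construction, let ψ : D → V be a k-linear map satisfying ψ([d₁,d₂]) = d₁·ψ(d₂) − d₂·ψ(d₁) for all d₁,d₂ ∈ D (a derivation from D to the D-module V). Then the map f : E → E defined by f(l + v + d) = l + (v + ψ(d)) + d is a Lie algebra automorphism of E. -/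
theorem gc_derivation_gives_automorphism
    {k L V D : Type*} [Field k] [CharZero k]
    [LieRing L] [LieAlgebra k L] [LieRing D] [LieAlgebra k D]
    [AddCommGroup V] [Module k V]
    -- (ii) an action of `D` on `L` by derivations of `L`
    (act : D →ₗ[k] L →ₗ[k] L)
    (hactLie : ∀ d₁ d₂ : D, ∀ l : L, act ⁅d₁, d₂⁆ l = act d₁ (act d₂ l) - act d₂ (act d₁ l))
    (hactDer : ∀ (d : D) (l₁ l₂ : L), act d ⁅l₁, l₂⁆ = ⁅act d l₁, l₂⁆ + ⁅l₁, act d l₂⁆)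
    -- (iii) a `D`-module `V` (regarded as a trivial `L`-module)
    (actV : D →ₗ[k] V →ₗ[k] V)
    (hactVLie : ∀ d₁ d₂ : D, ∀ v : V, actV ⁅d₁, d₂⁆ v = actV d₁ (actV d₂ v) - actV d₂ (actV d₁ v))
    -- (iv) an alternating central 2-cocycle `σ : L × L → V`, `D`-equivariant
    (σ : L →ₗ[k] L →ₗ[k] V)
    (hσalt : ∀ l : L, σ l l = 0)
    (hσcoc : ∀ l₁ l₂ l₃ : L, σ ⁅l₁, l₂⁆ l₃ + σ ⁅l₂, l₃⁆ l₁ + σ ⁅l₃, l₁⁆ l₂ = 0)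
    (hσequiv : ∀ (d : D) (l₁ l₂ : L), actV d (σ l₁ l₂) = σ (act d l₁) l₂ + σ l₁ (act d l₂))
    -- (v) an alternating 2-cocycle `τ : D × D → V`
    (τ : D →ₗ[k] D →ₗ[k] V)
    (hτalt : ∀ d : D, τ d d = 0)
    (hτcoc : ∀ d₁ d₂ d₃ : D,
      actV d₁ (τ d₂ d₃) + actV d₂ (τ d₃ d₁) + actV d₃ (τ d₁ d₂)
        = τ ⁅d₁, d₂⁆ d₃ + τ ⁅d₂, d₃⁆ d₁ + τ ⁅d₃, d₁⁆ d₂)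
    -- a derivation `ψ : D → V`
    (ψ : D →ₗ[k] V)
    (hψ : ∀ d₁ d₂ : D, ψ ⁅d₁, d₂⁆ = actV d₁ (ψ d₂) - actV d₂ (ψ d₁)) :
    let br := gcBracket (fun d l => act d l) (fun d v => actV d v)
        (fun l₁ l₂ => σ l₁ l₂) (fun d₁ d₂ => τ d₁ d₂)
    let f : (L × V × D) → (L × V × D) := fun e => (e.1, e.2.1 + ψ e.2.2, e.2.2)
    -- `f` is a Lie algebra automorphism of `E`: it is k-linear, bijective,
    -- and preserves the bracket.
    (∀ (a : k) (e e' : L × V × D), f (a • e + e') = a • f e + f e') ∧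
    Function.Bijective f ∧
    (∀ e₁ e₂ : L × V × D, f (br e₁ e₂) = br (f e₁) (f e₂)) := by
  intro br f
  refine ⟨?_, ?_, ?_⟩
  · intro a e e'
    simp [f, Prod.ext_iff, smul_add, mul_comm]
    abel
  · have : Function.LeftInverse (fun e : L × V × D => (e.1, e.2.1 - ψ e.2.2, e.2.2)) f :=
      fun e => by simp [f]
    exact ⟨this.injective, fun e => ⟨(e.1, e.2.1 - ψ e.2.2, e.2.2), by simp [f]⟩⟩
  · intro e₁ e₂
    simp [f, br, gcBracket, Prod.ext_iff, hψ]
    abel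
end

section
/- In the Lie algebra E = (L,σ,τ) of the general construction, assume in addition that L has trivial centre, that the action map ρ : D → Der_k(L), d ↦ (l ↦ d·l), is injective, and that ρ(D) ∩ {ad_L l : l ∈ L} = {0}. Let f be a Lie algebra automorphism of E that fixes L ⊕ V pointwise. Then there exists a k-linear map ψ : D → V with ψ([d₁,d₂]) = d₁·ψ(d₂) − d₂·ψ(d₁) for all d₁,d₂ ∈ D such that f(l + v + d) = l + (v + ψ(d)) + d for all l ∈ L, v ∈ V, d ∈ D. -/
theorem gc_automorphism_fixing_LV_is_derivation_shift
    {k L V D : Type*} [Field k] [CharZero k]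
    [LieRing L] [LieAlgebra k L] [LieRing D] [LieAlgebra k D]
    [AddCommGroup V] [Module k V]
    -- (ii) an action of `D` on `L` by derivations of `L`
    (act : D →ₗ[k] L →ₗ[k] L)
    (hactLie : ∀ d₁ d₂ : D, ∀ l : L, act ⁅d₁, d₂⁆ l = act d₁ (act d₂ l) - act d₂ (act d₁ l))
    (hactDer : ∀ (d : D) (l₁ l₂ : L), act d ⁅l₁, l₂⁆ = ⁅act d l₁, l₂⁆ + ⁅l₁, act d l₂⁆)
    -- (iii) a `D`-module `V` (regarded as a trivial `L`-module)
    (actV : D →ₗ[k] V →ₗ[k] V)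
    (hactVLie : ∀ d₁ d₂ : D, ∀ v : V, actV ⁅d₁, d₂⁆ v = actV d₁ (actV d₂ v) - actV d₂ (actV d₁ v))
    -- (iv) an alternating central 2-cocycle `σ : L × L → V`, `D`-equivariant
    (σ : L →ₗ[k] L →ₗ[k] V)
    (hσalt : ∀ l : L, σ l l = 0)
    (hσcoc : ∀ l₁ l₂ l₃ : L, σ ⁅l₁, l₂⁆ l₃ + σ ⁅l₂, l₃⁆ l₁ + σ ⁅l₃, l₁⁆ l₂ = 0)
    (hσequiv : ∀ (d : D) (l₁ l₂ : L), actV d (σ l₁ l₂) = σ (act d l₁) l₂ + σ l₁ (act d l₂))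
    -- (v) an alternating 2-cocycle `τ : D × D → V`
    (τ : D →ₗ[k] D →ₗ[k] V)
    (hτalt : ∀ d : D, τ d d = 0)
    (hτcoc : ∀ d₁ d₂ d₃ : D,
      actV d₁ (τ d₂ d₃) + actV d₂ (τ d₃ d₁) + actV d₃ (τ d₁ d₂)
        = τ ⁅d₁, d₂⁆ d₃ + τ ⁅d₂, d₃⁆ d₁ + τ ⁅d₃, d₁⁆ d₂)
    -- `L` has trivial centre
    (hZ : ∀ z : L, (∀ l : L, ⁅z, l⁆ = 0) → z = 0)
    -- the action map `ρ : D → Der_k(L)` is injective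
    (hinj : ∀ d : D, (∀ l : L, act d l = 0) → d = 0)
    -- `ρ(D) ∩ ad_L(L) = 0`
    (hcap : ∀ (d : D) (l₀ : L), (∀ l : L, act d l = ⁅l₀, l⁆) → ∀ l : L, act d l = 0)
    -- a Lie algebra automorphism `f` of `E` fixing `L ⊕ V` pointwise
    (f : (L × V × D) ≃ₗ[k] (L × V × D))
    (hfbr : ∀ e₁ e₂ : L × V × D,
      f (gcBracket (fun d l => act d l) (fun d v => actV d v)
          (fun l₁ l₂ => σ l₁ l₂) (fun d₁ d₂ => τ d₁ d₂) e₁ e₂)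
        = gcBracket (fun d l => act d l) (fun d v => actV d v)
          (fun l₁ l₂ => σ l₁ l₂) (fun d₁ d₂ => τ d₁ d₂) (f e₁) (f e₂))
    (hfix : ∀ (l : L) (v : V), f (l, v, 0) = (l, v, 0)) :
    -- then `f(l+v+d) = l + (v + ψ(d)) + d` for a derivation `ψ : D → V`
    ∃ ψ : D →ₗ[k] V,
      (∀ d₁ d₂ : D, ψ ⁅d₁, d₂⁆ = actV d₁ (ψ d₂) - actV d₂ (ψ d₁)) ∧
      ∀ (l : L) (v : V) (d : D), f (l, v, d) = (l, v + ψ d, d) := by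

  classical
  -- a linear map `d ↦ (0,0,d)`
  let ι : D →ₗ[k] (L × V × D) :=
    { toFun := fun d => (0, 0, d)
      map_add' := by intro d₁ d₂; simp [Prod.ext_iff]
      map_smul' := by intro c d; simp [Prod.ext_iff] }
  let ψ : D →ₗ[k] V :=
    (LinearMap.fst k V D)
      ∘ₗ (LinearMap.snd k L (V × D)) ∘ₗ (f.toLinearMap ∘ₗ ι)
  have hψdef : ∀ d : D, ψ d = (f (0, 0, d)).2.1 := fun d => rfl
  -- key: f (0,0,d) = (0, ψ d, d)
  have key : ∀ d : D, f (0, 0, d) = (0, ψ d, d) := by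
    intro d
    have hb := fun l : L => hfbr (0, 0, d) (l, 0, 0)
    simp only [gcBracket, lie_zero, zero_lie, map_zero, LinearMap.zero_apply,
      add_zero, sub_zero, zero_add, zero_sub, neg_zero, hfix, Prod.mk.injEq] at hb
    have h1 : ∀ l : L, act d l = ⁅(f (0, 0, d)).1, l⁆ + act (f (0, 0, d)).2.2 l :=
      fun l => (hb l).1
    have hdc : ∀ l : L, act (d - (f (0, 0, d)).2.2) l = ⁅(f (0, 0, d)).1, l⁆ := by
      intro l
      rw [map_sub, LinearMap.sub_apply, h1 l]
      abel
    have hzero : ∀ l : L, act (d - (f (0, 0, d)).2.2) l = 0 :=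
      hcap _ _ hdc
    have hc : (f (0, 0, d)).2.2 = d := by
      have := hinj _ hzero
      have := sub_eq_zero.mp this
      exact this.symm
    have ha : (f (0, 0, d)).1 = 0 := by
      apply hZ
      intro l
      have := hdc l
      rw [hc, sub_self, map_zero] at this
      exact this.symm
    calc f (0, 0, d) = ((f (0, 0, d)).1, (f (0, 0, d)).2.1, (f (0, 0, d)).2.2) := rfl
      _ = (0, ψ d, d) := by rw [ha, hc, hψdef]
  have hful : ∀ (l : L) (v : V) (d : D), f (l, v, d) = (l, v + ψ d, d) := by
    intro l v d
    have : ((l, v, d) : L × V × D) = (l, v, 0) + (0, 0, d) := by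
      simp [Prod.ext_iff]
    rw [this, map_add, hfix, key]
    simp [Prod.ext_iff]
  refine ⟨ψ, ?_, hful⟩
  intro d₁ d₂
  have hb := hfbr (0, 0, d₁) (0, 0, d₂)
  simp only [gcBracket, lie_zero, zero_lie, map_zero, LinearMap.zero_apply,
    add_zero, sub_zero, zero_add, zero_sub, neg_zero, sub_self] at hb
  rw [hful, key, key] at hb
  simp only [gcBracket, lie_zero, zero_lie, map_zero, LinearMap.zero_apply,
    add_zero, sub_zero, zero_add, Prod.mk.injEq] at hb
  have h2 := hb.2.1
  have h3 : τ d₁ d₂ + ψ ⁅d₁, d₂⁆ = τ d₁ d₂ + (actV d₁ (ψ d₂) - actV d₂ (ψ d₁)) := by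
    rw [h2]; abel
  exact add_left_cancel h3
end

section
/- Let E = (L, σ_D, τ) be the Lie algebra of the general construction, where L carries an invariant symmetric bilinear form (·|·), D acts on L by derivations that are skew with respect to (·|·), V ⊆ D* is a D-submodule (with contragredient action (d·φ)(d') = −φ([d,d'])) containing all σ_D(l₁,l₂), and σ_D(l₁,l₂)(d) = (d·l₁ | l₂). For g a Lie algebra automorphism of L, define f_g : E → E by f_g(l + v + d) = g(l) + v + d. Then: (i) if g commutes with the action of every d ∈ D (g∘d = d∘g on L) and g is orthogonal with respect to the form ((g(l) | g(l')) = (l | l') for all l,l' ∈ L), then f_g is a Lie algebra automorphism of E; (ii) conversely, if f_g is a Lie algebra automorphism of E, then g∘d = d∘g on L for every d ∈ D. -/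
theorem gc_lift_fix
    {k L D : Type*} [Field k] [CharZero k]
    [LieRing L] [LieAlgebra k L] [LieRing D] [LieAlgebra k D]
    -- an invariant symmetric bilinear form on `L`
    (B : L →ₗ[k] L →ₗ[k] k)
    (hsymm : ∀ l₁ l₂ : L, B l₁ l₂ = B l₂ l₁)
    (hinv : ∀ l₁ l₂ l₃ : L, B ⁅l₁, l₂⁆ l₃ = B l₁ ⁅l₂, l₃⁆)
    -- an action of `D` on `L` by derivations which are skew with respect to `B`
    (act : D →ₗ[k] L →ₗ[k] L)
    (hactLie : ∀ d₁ d₂ : D, ∀ l : L, act ⁅d₁, d₂⁆ l = act d₁ (act d₂ l) - act d₂ (act d₁ l))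
    (hactDer : ∀ (d : D) (l₁ l₂ : L), act d ⁅l₁, l₂⁆ = ⁅act d l₁, l₂⁆ + ⁅l₁, act d l₂⁆)
    (hskew : ∀ (d : D) (l : L), B (act d l) l = 0)
    -- a `D`-submodule `V ⊆ D*` for the contragredient action `(d·φ)(d') = −φ([d,d'])` …
    (V : Submodule k (Module.Dual k D))
    (hVclosed : ∀ (d : D) (φ : Module.Dual k D), φ ∈ V →
      (-(φ ∘ₗ (LieAlgebra.ad k D d))) ∈ V)
    -- … containing all the functionals `σ_D(l₁,l₂) : d ↦ (d·l₁ | l₂)`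
    (hσV : ∀ l₁ l₂ : L, ((B.flip l₂) ∘ₗ (act.flip l₁)) ∈ V)
    -- a 2-cocycle `τ : D × D → V`
    (τ : D →ₗ[k] D →ₗ[k] V)
    (hτalt : ∀ d : D, τ d d = 0)
    (hτcoc : ∀ d₁ d₂ d₃ : D,
      (⟨-(↑(τ d₂ d₃) ∘ₗ (LieAlgebra.ad k D d₁)), hVclosed d₁ _ (τ d₂ d₃).2⟩ : V)
      + ⟨-(↑(τ d₃ d₁) ∘ₗ (LieAlgebra.ad k D d₂)), hVclosed d₂ _ (τ d₃ d₁).2⟩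
      + ⟨-(↑(τ d₁ d₂) ∘ₗ (LieAlgebra.ad k D d₃)), hVclosed d₃ _ (τ d₁ d₂).2⟩
        = τ ⁅d₁, d₂⁆ d₃ + τ ⁅d₂, d₃⁆ d₁ + τ ⁅d₃, d₁⁆ d₂)
    -- a Lie algebra automorphism `g` of `L`
    (g : L ≃ₗ[k] L)
    (hg : ∀ a b : L, g ⁅a, b⁆ = ⁅g a, g b⁆) :
    -- the Lie algebra `E = (L, σ_D, τ)` of the general construction:
    let br := gcBracket (L := L) (V := V) (D := D)
        (fun d l => act d l)
        (fun d φ => ⟨-(↑φ ∘ₗ (LieAlgebra.ad k D d)), hVclosed d _ φ.2⟩)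
        (fun l₁ l₂ => ⟨(B.flip l₂) ∘ₗ (act.flip l₁), hσV l₁ l₂⟩)
        (fun d₁ d₂ => τ d₁ d₂)
    let f_g : (L × V × D) → (L × V × D) := fun e => (g e.1, e.2.1, e.2.2)
    -- (i) if `g` commutes with the action of `D` and is orthogonal w.r.t. the form,
    --     then `f_g` is a Lie algebra automorphism of `E`;
    ((∀ (d : D) (l : L), g (act d l) = act d (g l)) →
     (∀ l l' : L, B (g l) (g l') = B l l') →
      (Function.Bijective f_g ∧
       ∀ e₁ e₂ : L × V × D, f_g (br e₁ e₂) = br (f_g e₁) (f_g e₂))) ∧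
    -- (ii) conversely, if `f_g` is a Lie algebra automorphism of `E`,
    --      then `g` commutes with the action of every `d ∈ D`.
    ((∀ e₁ e₂ : L × V × D, f_g (br e₁ e₂) = br (f_g e₁) (f_g e₂)) →
      ∀ (d : D) (l : L), g (act d l) = act d (g l)) := by

  intro br f_g
  constructor
  · intro hcomm _horth
    constructor
    · exact Function.Bijective.prodMap g.bijective Function.bijective_id
    · intro e₁ e₂
      simp only [f_g, br, gcBracket, Prod.mk.injEq]
      refine ⟨?_, ?_, trivial⟩
      · simp [map_add, map_sub, hg, hcomm]
      · have h : (⟨B.flip e₂.1 ∘ₗ act.flip e₁.1, hσV _ _⟩ : V)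
            = ⟨B.flip (g e₂.1) ∘ₗ act.flip (g e₁.1), hσV _ _⟩ := by
          apply Subtype.ext
          ext d
          simp only [LinearMap.comp_apply, LinearMap.flip_apply]
          rw [← hcomm, _horth]
        rw [h]
  · intro hc d l
    have := congrArg Prod.fst (hc (0, 0, d) (l, 0, 0))
    simpa [f_g, br, gcBracket] using this
end

section
/- Let k be a field, let 𝔤 be a Lie algebra over k with trivial centre (Z(𝔤) = 0), let R̃ be a commutative associative unital k-algebra, and let R ⊆ R̃ be a k-subspace. If an element x̃ of the Lie algebra 𝔤 ⊗_k R̃ satisfies [x̃, x ⊗ 1] ∈ 𝔤 ⊗_k R for every x ∈ 𝔤 (bracket taken in 𝔤 ⊗_k R̃), then x̃ ∈ 𝔤 ⊗_k R. -/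
open TensorProduct LinearMap

/-!
Reduce modulo `R`: by right exactness of `⊗ 𝔤`, `R ⊗ 𝔤` is the kernel of `R̃ ⊗ 𝔤 → (R̃/R) ⊗ 𝔤`,
and this map intertwines `1 ⊗ ad x` on both sides, so the image of `x̃` is killed by every
`1 ⊗ ad x`. Expanding it in a basis of the `k`-vector space `R̃/R`, every coefficient is then
central in `𝔤`, hence zero.
-/

namespace TensorProduct

variable {R V M N ι : Type*} [CommRing R] [AddCommGroup V] [Module R V]
  [AddCommGroup M] [Module R M] [AddCommGroup N] [Module R N]

lemma equivFinsuppOfBasisLeft_lTensor [DecidableEq ι] (b : Module.Basis ι R V) (f : M →ₗ[R] N)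
    (z : V ⊗[R] M) (i : ι) :
    equivFinsuppOfBasisLeft b (f.lTensor V z) i = f (equivFinsuppOfBasisLeft b z i) := by
  induction z using TensorProduct.induction_on with
  | zero => simp
  | tmul v m => simp
  | add z w hz hw => simp [hz, hw]

lemma eq_zero_of_forall_lTensor_eq_zero [Module.Free R V] {ι' : Type*} (f : ι' → M →ₗ[R] N)
    (hf : ∀ m, (∀ j, f j m = 0) → m = 0) {z : V ⊗[R] M} (hz : ∀ j, (f j).lTensor V z = 0) :
    z = 0 := by
  classical
  let e := equivFinsuppOfBasisLeft (Module.Free.chooseBasis R V) (N := M)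
  suffices e z = 0 by simpa using this
  ext i
  refine hf _ fun j => ?_
  rw [← equivFinsuppOfBasisLeft_lTensor, hz, map_zero, Finsupp.zero_apply]

end TensorProduct

lemma LieAlgebra.ExtendScalars.lie_one_tmul {R A L : Type*} [CommRing R] [CommRing A] [Algebra R A]
    [LieRing L] [LieAlgebra R L] (z : A ⊗[R] L) (x : L) :
    ⁅z, (1 : A) ⊗ₜ[R] x⁆ = (-LieAlgebra.ad R L x).lTensor A z := by
  induction z using TensorProduct.induction_on with
  | zero => simp
  | tmul a y =>
    rw [LieAlgebra.ExtendScalars.bracket_tmul, mul_one, ← lie_skew y x, tmul_neg]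
    simp
  | add z w hz hw => rw [add_lie, hz, hw, map_add]

theorem bracket_in_subspace_tensor_implies_membership
    {k : Type*} [Field k]
    {g : Type*} [LieRing g] [LieAlgebra k g]
    -- `𝔤` has trivial centre
    (hZ : ∀ z : g, (∀ x : g, ⁅z, x⁆ = 0) → z = 0)
    {Rt : Type*} [CommRing Rt] [Algebra k Rt]
    -- a `k`-subspace `R ⊆ R̃`
    (R : Submodule k Rt)
    -- `𝔤 ⊗ R` viewed inside `𝔤 ⊗ R̃`
    (xt : Rt ⊗[k] g)
    (hxt : ∀ x : g, ⁅xt, (1 : Rt) ⊗ₜ[k] x⁆ ∈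
      LinearMap.range (TensorProduct.map R.subtype (LinearMap.id (R := k) (M := g)))) :
    xt ∈ LinearMap.range (TensorProduct.map R.subtype (LinearMap.id (R := k) (M := g))) := by
  have hrange : range (map R.subtype (LinearMap.id (R := k) (M := g))) = ker (R.mkQ.rTensor g) :=
    (rTensor_mkQ g R).symm
  rw [hrange] at hxt ⊢
  refine eq_zero_of_forall_lTensor_eq_zero (fun x => -LieAlgebra.ad k g x)
    (fun z hz => hZ z fun x => by simpa using hz x) fun x => ?_
  rw [← comp_apply, lTensor_comp_rTensor, ← rTensor_comp_lTensor, comp_apply,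
    ← LieAlgebra.ExtendScalars.lie_one_tmul]
  exact hxt x
end

section
/- Let Ẽ = (L̃, σ̃, τ) be the Lie algebra of the general construction with L̃ = 𝔤 ⊗_k R̃, where 𝔤 is a Lie algebra over k with trivial centre, R ⊆ R̃ are commutative associative unital k-algebras, D acts on R̃ by k-derivations leaving R invariant (and hence acts on L̃ by d·(x⊗s) = x⊗d(s), leaving L = 𝔤 ⊗_k R invariant), and σ̃ : L̃ × L̃ → V restricts to a map σ : L × L → V. Then E = L ⊕ V ⊕ D is a Lie subalgebra of Ẽ, namely E = (L,σ,τ), and: for every Lie algebra automorphism f̃ of Ẽ with f̃(L ⊕ V) = L ⊕ V, one has f̃(E) = E. -/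
/-!
`L = R ⊗ 𝔤` is the range of the Lie algebra map `R ⊗ 𝔤 → R̃ ⊗ 𝔤`, hence a subalgebra, and it is
stable under `D` because `D` preserves `R`; this gives closure of `E`. For an automorphism `f̃`
preserving `L ⊕ V` it suffices to show that the `L̃`-component of `f̃(d)` lies in `L` for `d ∈ D`.
That component normalises `L`, since `[d, u] ∈ L ⊕ V` for `u ∈ L ⊕ V`. Finally `L` is
self-normalising in `L̃`: by right exactness, membership in `L` is tested in `(R̃/R) ⊗ 𝔤`, where
bracketing with `1 ⊗ x` acts as `id ⊗ ad x`, and over a field the maps `id ⊗ ad x` have no common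
kernel because `𝔤` has trivial centre.
-/

open TensorProduct

namespace LinearMap

section CommRing

variable {R M N : Type*} [CommRing R] [AddCommGroup M] [Module R M] [AddCommGroup N] [Module R N]

theorem mem_range_rTensor_subtype_iff (S : Submodule R M) (l : M ⊗[R] N) :
    l ∈ range (rTensor N S.subtype) ↔ rTensor N S.mkQ l = 0 :=
  ((rTensor_exact N (exact_subtype_mkQ S) S.mkQ_surjective) l).symm

theorem rTensor_mem_range_rTensor_subtype {S : Submodule R M} {φ : M →ₗ[R] M}
    (hφ : ∀ m ∈ S, φ m ∈ S) {l : M ⊗[R] N} (hl : l ∈ range (rTensor N S.subtype)) :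
    rTensor N φ l ∈ range (rTensor N S.subtype) := by
  rw [mem_range_rTensor_subtype_iff] at hl ⊢
  rw [← comp_apply, ← rTensor_comp, ← S.mapQ_mkQ S φ (h := hφ), rTensor_comp, comp_apply, hl,
    map_zero]

end CommRing

section Field

variable {k M N P ι : Type*} [Field k] [AddCommGroup M] [Module k M] [AddCommGroup N] [Module k N]
  [AddCommGroup P] [Module k P]

theorem eq_zero_of_forall_lTensor_eq_zero {f : ι → N →ₗ[k] P}
    (hf : ∀ n, (∀ i, f i n = 0) → n = 0) {u : M ⊗[k] N} (hu : ∀ i, lTensor M (f i) u = 0) :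
    u = 0 := by
  classical
  let b := Module.Basis.ofVectorSpace k M
  have coord_lTensor : ∀ i (v : M ⊗[k] N) j,
      equivFinsuppOfBasisLeft b (lTensor M (f i) v) j = f i (equivFinsuppOfBasisLeft b v j) := by
    intro i v j
    induction v using TensorProduct.induction_on with
    | zero => simp
    | tmul m n => simp
    | add v w hv hw => simp only [map_add, Finsupp.add_apply, hv, hw]
  refine (equivFinsuppOfBasisLeft b).map_eq_zero_iff.mp (Finsupp.ext fun j => hf _ fun i => ?_)
  rw [← coord_lTensor, hu, map_zero, Finsupp.zero_apply]

theorem mem_range_rTensor_subtype_of_forall_lTensor_mem (S : Submodule k M) {f : ι → N →ₗ[k] P}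
    (hf : ∀ n, (∀ i, f i n = 0) → n = 0) {l : M ⊗[k] N}
    (hl : ∀ i, lTensor M (f i) l ∈ range (rTensor P S.subtype)) :
    l ∈ range (rTensor N S.subtype) := by
  simp only [mem_range_rTensor_subtype_iff] at hl ⊢
  refine eq_zero_of_forall_lTensor_eq_zero hf fun i => ?_
  rw [← comp_apply, lTensor_comp_rTensor, ← rTensor_comp_lTensor, comp_apply, hl]

end Field

end LinearMap

namespace LieAlgebra.ExtendScalars

open LinearMap

variable {R A L : Type*} [CommRing R] [CommRing A] [Algebra R A] [LieRing L] [LieAlgebra R L]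

theorem one_tmul_lie (x : L) (l : A ⊗[R] L) :
    ⁅(1 : A) ⊗ₜ[R] x, l⁆ = lTensor A (LieModule.toEnd R L L x) l := by
  rw [← baseChange_eq_ltensor, ← LieModule.toEnd_baseChange]
  rfl

theorem lie_mem_range_rTensor_subalgebra (B : Subalgebra R A) {l₁ l₂ : A ⊗[R] L}
    (h₁ : l₁ ∈ range (rTensor L (Subalgebra.toSubmodule B).subtype))
    (h₂ : l₂ ∈ range (rTensor L (Subalgebra.toSubmodule B).subtype)) :
    ⁅l₁, l₂⁆ ∈ range (rTensor L (Subalgebra.toSubmodule B).subtype) :=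
  (ExtendScalars.map B.val (LieHom.id : L →ₗ⁅R⁆ L)).range.lie_mem h₁ h₂

theorem mem_range_rTensor_subalgebra_of_forall_lie_mem {k : Type*} [Field k] [Algebra k A]
    [LieAlgebra k L] (hZ : ∀ z : L, (∀ x : L, ⁅z, x⁆ = 0) → z = 0) (B : Subalgebra k A)
    {l : A ⊗[k] L}
    (hl : ∀ m ∈ range (rTensor L (Subalgebra.toSubmodule B).subtype),
      ⁅l, m⁆ ∈ range (rTensor L (Subalgebra.toSubmodule B).subtype)) :
    l ∈ range (rTensor L (Subalgebra.toSubmodule B).subtype) := by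
  refine mem_range_rTensor_subtype_of_forall_lTensor_mem _ (f := LieModule.toEnd k L L)
    (fun z hz => hZ z fun x => by rw [← lie_skew, ← LieModule.toEnd_apply_apply k, hz, neg_zero])
    fun x => ?_
  rw [← one_tmul_lie, ← lie_skew]
  exact neg_mem (hl _ ⟨(1 : B) ⊗ₜ x, rfl⟩)

end LieAlgebra.ExtendScalars

section GeneralConstruction

variable {L V D : Type*} [LieRing L] [AddCommGroup V] [LieRing D]
  {act : D → L → L} {actV : D → V → V} {σ : L → L → V} {τ : D → D → V} {P : AddSubgroup L}

theorem gcBracket_fst_mem (hlie : ∀ l₁ ∈ P, ∀ l₂ ∈ P, ⁅l₁, l₂⁆ ∈ P)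
    (hact : ∀ d, ∀ l ∈ P, act d l ∈ P) {e₁ e₂ : L × V × D} (h₁ : e₁.1 ∈ P) (h₂ : e₂.1 ∈ P) :
    (gcBracket act actV σ τ e₁ e₂).1 ∈ P :=
  P.sub_mem (P.add_mem (hlie _ h₁ _ h₂) (hact _ _ h₂)) (hact _ _ h₁)

theorem fst_mem_of_gcBracket_hom (hact0 : ∀ l, act 0 l = 0) (hact : ∀ d, ∀ l ∈ P, act d l ∈ P)
    (hnorm : ∀ l, (∀ m ∈ P, ⁅l, m⁆ ∈ P) → l ∈ P) (G : (L × V × D) →+ (L × V × D))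
    (hG : ∀ e₁ e₂, G (gcBracket act actV σ τ e₁ e₂) = gcBracket act actV σ τ (G e₁) (G e₂))
    (hGP : G '' {e | e.1 ∈ P ∧ e.2.2 = 0} = {e | e.1 ∈ P ∧ e.2.2 = 0})
    {e : L × V × D} (he : e.1 ∈ P) :
    (G e).1 ∈ P := by
  have hD : ∀ d : D, (G (0, 0, d)).1 ∈ P := by
    intro d
    -- modulo `P`, `⁅G (0, 0, d), m⁆` is the first component of `G ⁅(0, 0, d), G⁻¹ (m, 0, 0)⁆`
    refine hnorm _ fun m hm => ?_
    obtain ⟨u, ⟨hu₁, hu₃⟩, hGu⟩ : (m, (0 : V), (0 : D)) ∈ G '' {e | e.1 ∈ P ∧ e.2.2 = 0} :=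
      hGP.symm.subset ⟨hm, rfl⟩
    have hbr : gcBracket act actV σ τ (0, 0, d) u ∈ {e | e.1 ∈ P ∧ e.2.2 = 0} :=
      ⟨by simpa [gcBracket, hu₃, hact0] using hact d _ hu₁, by simp [gcBracket, hu₃]⟩
    obtain ⟨hmem, -⟩ := hGP.subset ⟨_, hbr, rfl⟩
    rw [hG, hGu] at hmem
    simpa [gcBracket, hact0] using P.sub_mem hmem (hact (G (0, 0, d)).2.2 m hm)
  have hsplit : e = (e.1, e.2.1, 0) + (0, 0, e.2.2) := by ext <;> simp
  rw [hsplit, map_add]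
  exact P.add_mem (hGP.subset ⟨(e.1, e.2.1, 0), ⟨he, rfl⟩, rfl⟩).1 (hD e.2.2)

theorem fst_mem_iff_of_gcBracket_equiv (hact0 : ∀ l, act 0 l = 0)
    (hact : ∀ d, ∀ l ∈ P, act d l ∈ P) (hnorm : ∀ l, (∀ m ∈ P, ⁅l, m⁆ ∈ P) → l ∈ P)
    (G : (L × V × D) ≃+ (L × V × D))
    (hG : ∀ e₁ e₂, G (gcBracket act actV σ τ e₁ e₂) = gcBracket act actV σ τ (G e₁) (G e₂))
    (hGP : G '' {e | e.1 ∈ P ∧ e.2.2 = 0} = {e | e.1 ∈ P ∧ e.2.2 = 0}) (e : L × V × D) :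
    e.1 ∈ P ↔ (G e).1 ∈ P := by
  have hG' : ∀ e₁ e₂, G.symm (gcBracket act actV σ τ e₁ e₂)
      = gcBracket act actV σ τ (G.symm e₁) (G.symm e₂) :=
    fun e₁ e₂ => G.injective (by simp [hG])
  have hGP' : G.symm '' {e | e.1 ∈ P ∧ e.2.2 = 0} = {e | e.1 ∈ P ∧ e.2.2 = 0} := by
    conv_lhs => rw [← hGP]
    exact G.toEquiv.symm_image_image _
  refine ⟨fst_mem_of_gcBracket_hom hact0 hact hnorm G.toAddMonoidHom hG hGP, fun h => ?_⟩
  simpa using fst_mem_of_gcBracket_hom hact0 hact hnorm G.symm.toAddMonoidHom hG' hGP' h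

end GeneralConstruction

theorem gc_subalgebra_and_automorphism_restriction_general
    {k : Type*} [Field k]
    {g : Type*} [LieRing g] [LieAlgebra k g]
    -- `𝔤` has trivial centre
    (hZ : ∀ z : g, (∀ x : g, ⁅z, x⁆ = 0) → z = 0)
    -- commutative associative unital `k`-algebras `R ⊆ R̃`
    {Rt : Type*} [CommRing Rt] [Algebra k Rt] (Rsub : Subalgebra k Rt)
    {D : Type*} [LieRing D] [LieAlgebra k D]
    -- `D` acts on `R̃` by `k`-derivations leaving `R` invariant
    (actR : D →ₗ[k] Rt →ₗ[k] Rt)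
    (hactRInv : ∀ (d : D) (r : Rt), r ∈ Rsub → actR d r ∈ Rsub)
    -- a `D`-module `V`
    {V : Type*} [AddCommGroup V] [Module k V]
    (actV : D →ₗ[k] V →ₗ[k] V)
    -- an alternating central 2-cocycle `σ̃ : L̃ × L̃ → V` on `L̃ = 𝔤 ⊗ R̃`, `D`-equivariant
    (σt : (Rt ⊗[k] g) →ₗ[k] (Rt ⊗[k] g) →ₗ[k] V)
    -- an alternating 2-cocycle `τ : D × D → V`
    (τ : D →ₗ[k] D →ₗ[k] V) :
    -- `Ẽ = L̃ ⊕ V ⊕ D` with the bracket of the general construction,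
    -- `D` acting on `L̃` via `d·(s ⊗ x) = d(s) ⊗ x`:
    let br := gcBracket (L := Rt ⊗[k] g) (V := V) (D := D)
        (fun d l => LinearMap.rTensor g (actR d) l) (fun d v => actV d v)
        (fun l₁ l₂ => σt l₁ l₂) (fun d₁ d₂ => τ d₁ d₂)
    -- `L = 𝔤 ⊗ R ⊆ L̃`:
    let Lsub : Submodule k (Rt ⊗[k] g) :=
      LinearMap.range (TensorProduct.map (Subalgebra.toSubmodule Rsub).subtype
        (LinearMap.id (R := k) (M := g)))
    -- (a) `E = L ⊕ V ⊕ D` is a Lie subalgebra of `Ẽ` (it is closed under the bracket);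
    (∀ e₁ e₂ : (Rt ⊗[k] g) × V × D,
        e₁.1 ∈ Lsub → e₂.1 ∈ Lsub → (br e₁ e₂).1 ∈ Lsub) ∧
    -- (b) every Lie algebra automorphism `f̃` of `Ẽ` with `f̃(L ⊕ V) = L ⊕ V`
    --     satisfies `f̃(E) = E`.
    (∀ ft : ((Rt ⊗[k] g) × V × D) ≃ₗ[k] ((Rt ⊗[k] g) × V × D),
      (∀ e₁ e₂, ft (br e₁ e₂) = br (ft e₁) (ft e₂)) →
      (ft '' {e | e.1 ∈ Lsub ∧ e.2.2 = 0} = {e | e.1 ∈ Lsub ∧ e.2.2 = 0}) →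
      ∀ e : (Rt ⊗[k] g) × V × D, e.1 ∈ Lsub ↔ (ft e).1 ∈ Lsub) := by
  intro br Lsub
  have hact : ∀ d, ∀ l ∈ Lsub, LinearMap.rTensor g (actR d) l ∈ Lsub :=
    fun d _ => LinearMap.rTensor_mem_range_rTensor_subtype (hactRInv d)
  have hlie : ∀ l₁ ∈ Lsub, ∀ l₂ ∈ Lsub, ⁅l₁, l₂⁆ ∈ Lsub :=
    fun _ h₁ _ h₂ => LieAlgebra.ExtendScalars.lie_mem_range_rTensor_subalgebra Rsub h₁ h₂
  have hnorm : ∀ l, (∀ m ∈ Lsub, ⁅l, m⁆ ∈ Lsub) → l ∈ Lsub :=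
    fun _ => LieAlgebra.ExtendScalars.mem_range_rTensor_subalgebra_of_forall_lie_mem hZ Rsub
  refine ⟨fun _ _ => gcBracket_fst_mem (P := Lsub.toAddSubgroup) hlie hact, fun ft hft hS =>
    fst_mem_iff_of_gcBracket_equiv (P := Lsub.toAddSubgroup) (fun _ => by simp) hact hnorm
      ft.toAddEquiv hft hS⟩

theorem gc_subalgebra_and_automorphism_restriction
    {k : Type*} [Field k] [CharZero k]
    {g : Type*} [LieRing g] [LieAlgebra k g]
    -- `𝔤` has trivial centre
    (hZ : ∀ z : g, (∀ x : g, ⁅z, x⁆ = 0) → z = 0)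
    -- commutative associative unital `k`-algebras `R ⊆ R̃`
    {Rt : Type*} [CommRing Rt] [Algebra k Rt] (Rsub : Subalgebra k Rt)
    {D : Type*} [LieRing D] [LieAlgebra k D]
    -- `D` acts on `R̃` by `k`-derivations leaving `R` invariant
    (actR : D →ₗ[k] Rt →ₗ[k] Rt)
    (hactRLie : ∀ d₁ d₂ : D, ∀ r : Rt,
      actR ⁅d₁, d₂⁆ r = actR d₁ (actR d₂ r) - actR d₂ (actR d₁ r))
    (hactRDer : ∀ (d : D) (r s : Rt), actR d (r * s) = actR d r * s + r * actR d s)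
    (hactRInv : ∀ (d : D) (r : Rt), r ∈ Rsub → actR d r ∈ Rsub)
    -- a `D`-module `V`
    {V : Type*} [AddCommGroup V] [Module k V]
    (actV : D →ₗ[k] V →ₗ[k] V)
    (hactVLie : ∀ d₁ d₂ : D, ∀ v : V, actV ⁅d₁, d₂⁆ v = actV d₁ (actV d₂ v) - actV d₂ (actV d₁ v))
    -- an alternating central 2-cocycle `σ̃ : L̃ × L̃ → V` on `L̃ = 𝔤 ⊗ R̃`, `D`-equivariant
    (σt : (Rt ⊗[k] g) →ₗ[k] (Rt ⊗[k] g) →ₗ[k] V)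
    (hσalt : ∀ l : Rt ⊗[k] g, σt l l = 0)
    (hσcoc : ∀ l₁ l₂ l₃ : Rt ⊗[k] g, σt ⁅l₁, l₂⁆ l₃ + σt ⁅l₂, l₃⁆ l₁ + σt ⁅l₃, l₁⁆ l₂ = 0)
    (hσequiv : ∀ (d : D) (l₁ l₂ : Rt ⊗[k] g),
      actV d (σt l₁ l₂)
        = σt (LinearMap.rTensor g (actR d) l₁) l₂ + σt l₁ (LinearMap.rTensor g (actR d) l₂))
    -- an alternating 2-cocycle `τ : D × D → V`
    (τ : D →ₗ[k] D →ₗ[k] V)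
    (hτalt : ∀ d : D, τ d d = 0)
    (hτcoc : ∀ d₁ d₂ d₃ : D,
      actV d₁ (τ d₂ d₃) + actV d₂ (τ d₃ d₁) + actV d₃ (τ d₁ d₂)
        = τ ⁅d₁, d₂⁆ d₃ + τ ⁅d₂, d₃⁆ d₁ + τ ⁅d₃, d₁⁆ d₂) :
    -- `Ẽ = L̃ ⊕ V ⊕ D` with the bracket of the general construction,
    -- `D` acting on `L̃` via `d·(s ⊗ x) = d(s) ⊗ x`:
    let br := gcBracket (L := Rt ⊗[k] g) (V := V) (D := D)
        (fun d l => LinearMap.rTensor g (actR d) l) (fun d v => actV d v)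
        (fun l₁ l₂ => σt l₁ l₂) (fun d₁ d₂ => τ d₁ d₂)
    -- `L = 𝔤 ⊗ R ⊆ L̃`:
    let Lsub : Submodule k (Rt ⊗[k] g) :=
      LinearMap.range (TensorProduct.map (Subalgebra.toSubmodule Rsub).subtype
        (LinearMap.id (R := k) (M := g)))
    -- (a) `E = L ⊕ V ⊕ D` is a Lie subalgebra of `Ẽ` (it is closed under the bracket);
    (∀ e₁ e₂ : (Rt ⊗[k] g) × V × D,
        e₁.1 ∈ Lsub → e₂.1 ∈ Lsub → (br e₁ e₂).1 ∈ Lsub) ∧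
    -- (b) every Lie algebra automorphism `f̃` of `Ẽ` with `f̃(L ⊕ V) = L ⊕ V`
    --     satisfies `f̃(E) = E`.
    (∀ ft : ((Rt ⊗[k] g) × V × D) ≃ₗ[k] ((Rt ⊗[k] g) × V × D),
      (∀ e₁ e₂, ft (br e₁ e₂) = br (ft e₁) (ft e₂)) →
      (ft '' {e | e.1 ∈ Lsub ∧ e.2.2 = 0} = {e | e.1 ∈ Lsub ∧ e.2.2 = 0}) →
      ∀ e : (Rt ⊗[k] g) × V × D, e.1 ∈ Lsub ↔ (ft e).1 ∈ Lsub) :=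
  gc_subalgebra_and_automorphism_restriction_general hZ Rsub actR hactRInv actV σt τ
end
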